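/- Reality of the coupled zeros (Lemma C.4). Assume in addition that ℓ^∞ is real and that χ_1 and χ_2 are conjugation-equivariant, i.e. χ_k(conj(z)) = conj(χ_k(z)) for all z (equivalently, the collection of poles with their levels is invariant under complex conjugation), so that conj(φ_γ(z)) = φ_γ(conj(z)) for real γ. Let i ∈ {1, …, M} and let k = 1 if i ≤ M_1 and k = 2 otherwise, and suppose the zero ζ^{(k)}_i is real. Then for all sufficiently small real γ ≠ 0, the corresponding zero ζ_i(γ) of the coupled twist function φ_γ is real; moreover, for all sufficiently small real γ ≠ 0, φ_γ'(ζ_i(γ)) is a nonzero real number with the same sign as φ_k'(ζ^{(k)}_i). -/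

import Mathlib

/-!
Near the translate (by the real number `0` or `γ⁻¹`) of the real zero `ζ⁰` of `φ_k`, the coupled
function `φ_γ` is `φ_k` translated, plus the other partial-fraction part evaluated at distance about
`|γ|⁻¹` from its poles, where its derivative is small. So on a fixed disc around the translate of
`ζ⁰`, `φ_γ'` stays within `|φ_k'(ζ⁰)| / 2` of the nonzero real number `φ_k'(ζ⁰)`, and `φ_γ` is
injective there by the mean value inequality. The disc is symmetric under conjugation and `φ_γ` is
conjugation-equivariant, so the conjugate of the zero `ζ_i(γ)` is a zero in the same disc, hence
equal to it. The derivative of an equivariant function at a real point is real, and being close to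
`φ_k'(ζ⁰)` it has the same sign.
-/

open scoped BigOperators Topology ComplexConjugate
open Filter

/-- The partial-fraction part `χ(w)` of a twist function (site `a` has multiplicity `m a + 1`). -/
noncomputable def chiFun {n : ℕ} (z : Fin n → ℂ) (m : Fin n → ℕ)
    (l : Fin n → ℕ → ℂ) (w : ℂ) : ℂ :=
  ∑ a, ∑ p ∈ Finset.range (m a + 1), l a p / (w - z a) ^ (p + 1)

open Metric Bornology

theorem eventually_nhdsNE_zero_iff_abs {P : ℝ → Prop} :
    (∀ᶠ γ in 𝓝[≠] 0, P γ) ↔ ∃ ε > 0, ∀ γ : ℝ, 0 < |γ| → |γ| < ε → P γ := by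
  simp only [eventually_nhdsWithin_iff, Metric.eventually_nhds_iff, Real.dist_eq, sub_zero,
    Set.mem_compl_singleton_iff, abs_pos]
  exact exists_congr fun ε => and_congr_right fun _ => forall_congr' fun γ => imp.swap

theorem tendsto_nhdsNE_zero_of_norm_sub_le_mul_abs {E : Type*} [SeminormedAddCommGroup E]
    {f : ℝ → E} {a : E} {C : ℝ} (h : ∀ᶠ γ in 𝓝[≠] 0, ‖f γ - a‖ ≤ C * |γ|) :
    Tendsto f (𝓝[≠] 0) (𝓝 a) := by
  have hC : Tendsto (fun γ : ℝ => C * |γ|) (𝓝[≠] 0) (𝓝 0) := by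
    simpa using ((continuous_abs.const_mul C).tendsto (0 : ℝ)).mono_left nhdsWithin_le_nhds
  exact tendsto_iff_norm_sub_tendsto_zero.2
    (squeeze_zero' (Eventually.of_forall fun _ => norm_nonneg _) h hC)

theorem mul_pos_of_abs_sub_lt_abs {a b : ℝ} (h : |a - b| < |b|) : 0 < a * b := by
  rcases lt_trichotomy b 0 with hb | hb | hb
  · rw [abs_of_neg hb] at h
    nlinarith [(abs_lt.1 h).2]
  · simp only [hb, sub_zero, abs_zero] at h
    exact absurd h (abs_nonneg a).not_gt
  · rw [abs_of_pos hb] at h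
    nlinarith [(abs_lt.1 h).1]

theorem HasDerivAt.conj_eq_of_conj_comm {𝕜 : Type*} [NontriviallyNormedField 𝕜] [StarRing 𝕜]
    [NormedStarGroup 𝕜] {f : 𝕜 → 𝕜} {f' x : 𝕜} (hf : ∀ w, f (conj w) = conj (f w))
    (hx : conj x = x) (h : HasDerivAt f f' x) : conj f' = f' := by
  have hfix : conj ∘ f ∘ conj = f := funext fun w => by simp [hf]
  have h' : HasDerivAt f (conj f') x := by
    simpa [hfix] using (hasDerivAt_conj_conj_iff (f := f) (x := x) (f' := conj f')).2
      (by simpa [hx] using h)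
  exact h'.unique h

theorem Convex.injOn_of_norm_hasDerivAt_sub_le {𝕜 G : Type*} [RCLike 𝕜] [NormedAddCommGroup G]
    [NormedSpace 𝕜 G] {f f' : 𝕜 → G} {s : Set 𝕜} {d : G} {K : ℝ} (hs : Convex ℝ s)
    (hf : ∀ w ∈ s, HasDerivAt f (f' w) w) (hK : K < ‖d‖) (hbound : ∀ w ∈ s, ‖f' w - d‖ ≤ K) :
    Set.InjOn f s := by
  intro x hx y hy hxy
  have hlin : ∀ w ∈ s, HasDerivWithinAt (fun w => f w - w • d) (f' w - d) s w := fun w hw =>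
    ((hf w hw).sub ((hasDerivAt_id w).smul_const d)).hasDerivWithinAt.congr_deriv (by simp)
  have hmvt := hs.norm_image_sub_le_of_norm_hasDerivWithin_le hlin hbound hx hy
  have hdiff : (f y - y • d) - (f x - x • d) = -((y - x) • d) := by rw [hxy, sub_smul]; abel
  rw [hdiff, norm_neg, norm_smul, mul_comm] at hmvt
  have : ‖y - x‖ = 0 := by nlinarith [norm_nonneg (y - x)]
  exact (sub_eq_zero.1 (norm_eq_zero.1 this)).symm

theorem Complex.im_eq_zero_of_injOn_ball {F : ℂ → ℂ} (hF : ∀ w, F (conj w) = conj (F w))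
    {p x : ℂ} {r : ℝ} (hp : p.im = 0) (hinj : Set.InjOn F (ball p r)) (hx : x ∈ ball p r)
    (hFx : (F x).im = 0) : x.im = 0 := by
  have hpc : conj p = p := conj_eq_iff_im.2 hp
  have hxc : conj x ∈ ball p r := by
    rwa [mem_ball, dist_eq_norm, ← hpc, ← map_sub, norm_conj, ← dist_eq_norm]
  exact conj_eq_iff_im.1 (hinj hxc hx (by rw [hF, conj_eq_iff_im.2 hFx]))

theorem Complex.im_eq_zero_and_re_mul_pos_of_conj_comm {F F' : ℂ → ℂ}
    (hF : ∀ w, F (conj w) = conj (F w)) {p d x : ℂ} {r : ℝ} (hp : p.im = 0)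
    (hd : d.im = 0) (hd0 : d ≠ 0) (hderiv : ∀ w ∈ ball p r, HasDerivAt F (F' w) w)
    (hbound : ∀ w ∈ ball p r, ‖F' w - d‖ ≤ ‖d‖ / 2) (hx : x ∈ ball p r) (hFx : F x = 0) :
    x.im = 0 ∧ (F' x).im = 0 ∧ 0 < (F' x).re * d.re := by
  have hinj := (convex_ball p r).injOn_of_norm_hasDerivAt_sub_le hderiv
    (half_lt_self (norm_pos_iff.2 hd0)) hbound
  have hxr : x.im = 0 := im_eq_zero_of_injOn_ball hF hp hinj hx (by simp [hFx])
  have hD : (F' x).im = 0 := conj_eq_iff_im.1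
    ((hderiv x hx).conj_eq_of_conj_comm hF (conj_eq_iff_im.2 hxr))
  refine ⟨hxr, hD, mul_pos_of_abs_sub_lt_abs ?_⟩
  calc |(F' x).re - d.re| = ‖F' x - d‖ := by
        rw [← sub_re, abs_re_eq_norm.2 (by simp [hD, hd])]
    _ ≤ ‖d‖ / 2 := hbound x hx
    _ < ‖d‖ := half_lt_self (norm_pos_iff.2 hd0)
    _ = |d.re| := (abs_re_eq_norm.2 hd).symm

section chiFun

variable {n : ℕ} (z : Fin n → ℂ) (m : Fin n → ℕ) (l : Fin n → ℕ → ℂ)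

noncomputable def chiDeriv (w : ℂ) : ℂ :=
  ∑ a, ∑ p ∈ Finset.range (m a + 1), -(p + 1 : ℂ) * l a p / (w - z a) ^ (p + 2)

theorem eventually_cobounded_ne : ∀ᶠ w in cobounded ℂ, ∀ a, w ≠ z a :=
  eventually_all.2 fun a => (eventually_cobounded_le_norm (‖z a‖ + 1)).mono fun w hw h => by
    rw [h] at hw
    linarith

variable {z m l}

theorem hasDerivAt_chiFun {w : ℂ} (hw : ∀ a, w ≠ z a) :
    HasDerivAt (chiFun z m l) (chiDeriv z m l w) w := by
  refine HasDerivAt.fun_sum fun a _ => HasDerivAt.fun_sum fun p _ => ?_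
  have hwz : w - z a ≠ 0 := sub_ne_zero.2 (hw a)
  have hpow : HasDerivAt (fun x : ℂ => (x - z a) ^ (p + 1)) ((p + 1 : ℕ) * (w - z a) ^ p) w := by
    simpa using ((hasDerivAt_id w).sub_const (z a)).fun_pow (p + 1)
  refine ((hasDerivAt_const w (l a p)).fun_div hpow (pow_ne_zero _ hwz)).congr_deriv ?_
  field_simp
  push_cast
  ring

theorem continuousAt_chiDeriv {w : ℂ} (hw : ∀ a, w ≠ z a) : ContinuousAt (chiDeriv z m l) w :=
  tendsto_finsetSum _ fun a _ => tendsto_finsetSum _ fun _ _ =>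
    continuousAt_const.div ((continuousAt_id.sub continuousAt_const).pow _)
      (pow_ne_zero _ (sub_ne_zero.2 (hw a)))

theorem tendsto_chiDeriv_cobounded : Tendsto (chiDeriv z m l) (cobounded ℂ) (𝓝 0) := by
  have hterm (a : Fin n) (p : ℕ) : Tendsto (fun w => -(p + 1 : ℂ) * l a p / (w - z a) ^ (p + 2))
      (cobounded ℂ) (𝓝 0) := by
    have hpow : Tendsto (fun w : ℂ => (w - z a) ^ (p + 2)) (cobounded ℂ) (cobounded ℂ) :=
      (tendsto_pow_cobounded_cobounded (by omega)).comp (tendsto_sub_const_cobounded (z a))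
    simpa [div_eq_mul_inv] using
      (tendsto_inv₀_cobounded.comp hpow).const_mul (-(p + 1 : ℂ) * l a p)
  have hsum := tendsto_finsetSum Finset.univ fun a _ =>
    tendsto_finsetSum (Finset.range (m a + 1)) fun p _ => hterm a p
  simp only [Finset.sum_const_zero] at hsum
  exact hsum

end chiFun

section coupled

variable {na nb : ℕ} {za : Fin na → ℂ} {ma : Fin na → ℕ} {la : Fin na → ℕ → ℂ}
  {zb : Fin nb → ℂ} {mb : Fin nb → ℕ} {lb : Fin nb → ℕ → ℂ}

theorem exists_ball_norm_chiDeriv_add_shift_sub_le {ζ0 : ℂ} (hζ0 : ∀ a, ζ0 ≠ za a) {δ : ℝ}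
    (hδ : 0 < δ) :
    ∃ r > 0, ∃ R : ℝ, ∀ c c' : ℂ, R ≤ ‖c - c'‖ → ∀ w ∈ ball (ζ0 + c) r,
      HasDerivAt (fun w => chiFun za ma la (w - c) + chiFun zb mb lb (w - c'))
        (chiDeriv za ma la (w - c) + chiDeriv zb mb lb (w - c')) w ∧
      ‖chiDeriv za ma la (w - c) + chiDeriv zb mb lb (w - c') - chiDeriv za ma la ζ0‖ ≤ δ := by
  obtain ⟨r, hr, hnear⟩ := Metric.eventually_nhds_iff_ball.1
    ((eventually_all.2 fun a => eventually_ne_nhds (hζ0 a)).and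
      ((continuousAt_chiDeriv (m := ma) (l := la) hζ0).eventually
        (closedBall_mem_nhds _ (half_pos hδ))))
  obtain ⟨R, -, hfar⟩ := hasBasis_cobounded_norm.eventually_iff.1
    ((eventually_cobounded_ne zb).and
      ((tendsto_chiDeriv_cobounded (z := zb) (m := mb) (l := lb)).eventually
        (closedBall_mem_nhds 0 (half_pos hδ))))
  refine ⟨r, hr, R + ‖ζ0‖ + r, fun c c' hcc' w hw => ?_⟩
  have hwc : w - c ∈ ball ζ0 r := by
    rwa [mem_ball, dist_eq_norm, sub_sub, add_comm c, ← dist_eq_norm]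
  have hwc' : R ≤ ‖w - c'‖ := by
    have h1 : ‖c - c'‖ ≤ ‖w - c‖ + ‖w - c'‖ := by
      simpa [norm_sub_rev c w] using norm_sub_le_norm_sub_add_norm_sub c w c'
    have h2 : ‖w - c‖ ≤ ‖w - c - ζ0‖ + ‖ζ0‖ := norm_le_norm_sub_add _ _
    have h3 : ‖w - c - ζ0‖ < r := by rwa [mem_ball, dist_eq_norm] at hwc
    linarith
  obtain ⟨hpa, hda⟩ := hnear _ hwc
  obtain ⟨hpb, hdb⟩ := @hfar _ hwc'
  rw [dist_eq_norm] at hda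
  rw [dist_zero_right] at hdb
  refine ⟨((hasDerivAt_chiFun hpa).comp_sub_const w c).add
    ((hasDerivAt_chiFun hpb).comp_sub_const w c'), ?_⟩
  calc _ = ‖(chiDeriv za ma la (w - c) - chiDeriv za ma la ζ0) + chiDeriv zb mb lb (w - c')‖ := by
        ring_nf
    _ ≤ δ / 2 + δ / 2 := (norm_add_le _ _).trans (add_le_add hda hdb)
    _ = δ := add_halves δ

theorem eventually_im_eq_zero_and_deriv_re_mul_pos {α : Type*} {f : Filter α} {linf : ℂ}
    (hlinf : conj linf = linf)
    (hca : ∀ w, chiFun za ma la (conj w) = conj (chiFun za ma la w))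
    (hcb : ∀ w, chiFun zb mb lb (conj w) = conj (chiFun zb mb lb w))
    {ζ0 : ℂ} (hζ0 : ζ0.im = 0) (hpole : ∀ a, ζ0 ≠ za a)
    (hd : deriv (fun w => chiFun za ma la w - linf) ζ0 ≠ 0)
    {c c' : α → ℝ} {x : α → ℂ} (hsep : Tendsto (fun t => |c t - c' t|) f atTop)
    (hx : Tendsto (fun t => x t - c t) f (𝓝 ζ0))
    (hzero : ∀ᶠ t in f, chiFun za ma la (x t - c t) + chiFun zb mb lb (x t - c' t) - linf = 0) :
    ∀ᶠ t in f, (x t).im = 0 ∧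
      (deriv (fun w => chiFun za ma la (w - c t) + chiFun zb mb lb (w - c' t) - linf)
        (x t)).im = 0 ∧
      0 < (deriv (fun w => chiFun za ma la (w - c t) + chiFun zb mb lb (w - c' t) - linf)
            (x t)).re * (deriv (fun w => chiFun za ma la w - linf) ζ0).re := by
  have hderiv0 := (hasDerivAt_chiFun (m := ma) (l := la) hpole).sub_const linf
  rw [hderiv0.deriv] at hd ⊢
  have hdR : (chiDeriv za ma la ζ0).im = 0 := Complex.conj_eq_iff_im.1 <|
    hderiv0.conj_eq_of_conj_comm (fun w => by simp [hca, hlinf]) (Complex.conj_eq_iff_im.2 hζ0)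
  obtain ⟨r, hr, R, hball⟩ := exists_ball_norm_chiDeriv_add_shift_sub_le (zb := zb) (mb := mb)
    (lb := lb) hpole (half_pos (norm_pos_iff.2 hd))
  have hshift (s : ℝ) (w : ℂ) : conj w - s = conj (w - s) := by simp
  filter_upwards [hsep.eventually_ge_atTop R, hx.eventually (ball_mem_nhds ζ0 hr), hzero]
    with t hRt hxt hFt
  have hsep' : R ≤ ‖(c t : ℂ) - c' t‖ := by
    rwa [← Complex.ofReal_sub, Complex.norm_real, Real.norm_eq_abs]
  have hxt' : x t ∈ ball (ζ0 + c t) r := by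
    rwa [mem_ball, dist_eq_norm, ← sub_sub, sub_right_comm, ← dist_eq_norm]
  have hF : ∀ w, chiFun za ma la (conj w - c t) + chiFun zb mb lb (conj w - c' t) - linf
      = conj (chiFun za ma la (w - c t) + chiFun zb mb lb (w - c' t) - linf) := fun w => by
    rw [hshift, hshift, hca, hcb, map_sub, map_add, hlinf]
  have hderiv := fun w hw => ((hball _ _ hsep' w hw).1.sub_const linf)
  rw [(hderiv _ hxt').deriv]
  exact Complex.im_eq_zero_and_re_mul_pos_of_conj_comm hF (by simp [hζ0]) hdR hd hderiv
    (fun w hw => (hball _ _ hsep' w hw).2) hxt' hFt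

end coupled

theorem reality_of_coupled_zeros
    {n₁ n₂ M₁ M₂ : ℕ}
    (z1 : Fin n₁ → ℂ) (m1 : Fin n₁ → ℕ) (l1 : Fin n₁ → ℕ → ℂ)
    (z2 : Fin n₂ → ℂ) (m2 : Fin n₂ → ℕ) (l2 : Fin n₂ → ℕ → ℂ)
    (linf : ℂ)
    (ζ1 : Fin M₁ → ℂ) (ζ2 : Fin M₂ → ℂ)
    (hζ1p : ∀ i a, ζ1 i ≠ z1 a) (hζ2p : ∀ j a, ζ2 j ≠ z2 a)
    (hζ1s : ∀ i, deriv (fun w => chiFun z1 m1 l1 w - linf) (ζ1 i) ≠ 0)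
    (hζ2s : ∀ j, deriv (fun w => chiFun z2 m2 l2 w - linf) (ζ2 j) ≠ 0)
    -- reality assumptions: `ℓ^∞` real, `χ₁`, `χ₂` conjugation-equivariant
    (hlinfR : conj linf = linf)
    (hc1 : ∀ w : ℂ, chiFun z1 m1 l1 (conj w) = conj (chiFun z1 m1 l1 w))
    (hc2 : ∀ w : ℂ, chiFun z2 m2 l2 (conj w) = conj (chiFun z2 m2 l2 w))
    -- the zeros `ζ i γ` of the coupled twist function provided by the decoupling lemma
    (ε C : ℝ) (hε : 0 < ε)
    (ζ : Fin M₁ ⊕ Fin M₂ → ℝ → ℂ)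
    (hζ : ∀ γ : ℝ, 0 < |γ| → |γ| < ε →
      (Function.Injective fun i => ζ i γ) ∧
      (∀ i, chiFun z1 m1 l1 (ζ i γ) + chiFun z2 m2 l2 (ζ i γ - (γ : ℂ)⁻¹) - linf = 0 ∧
        deriv (fun w => chiFun z1 m1 l1 w + chiFun z2 m2 l2 (w - (γ : ℂ)⁻¹) - linf)
          (ζ i γ) ≠ 0) ∧
      (∀ i : Fin M₁, ‖ζ (Sum.inl i) γ - ζ1 i‖ ≤ C * |γ|) ∧
      (∀ j : Fin M₂, ‖ζ (Sum.inr j) γ - (γ : ℂ)⁻¹ - ζ2 j‖ ≤ C * |γ|))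
    -- the zero `ζ^{(k)}_i` under consideration is real
    (i : Fin M₁ ⊕ Fin M₂)
    (hreal : (Sum.elim ζ1 ζ2 i).im = 0) :
    ∃ ε' > (0 : ℝ), ∀ γ : ℝ, 0 < |γ| → |γ| < ε' →
      -- `ζ_i(γ)` is real …
      (ζ i γ).im = 0 ∧
      -- … and `φ_γ'(ζ_i(γ))` is a nonzero real number of the same sign as `φ_k'(ζ^{(k)}_i)`
      (deriv (fun w => chiFun z1 m1 l1 w + chiFun z2 m2 l2 (w - (γ : ℂ)⁻¹) - linf)
        (ζ i γ)).im = 0 ∧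
      0 < (deriv (fun w => chiFun z1 m1 l1 w + chiFun z2 m2 l2 (w - (γ : ℂ)⁻¹) - linf)
            (ζ i γ)).re
          * (Sum.elim (fun i => deriv (fun w => chiFun z1 m1 l1 w - linf) (ζ1 i))
              (fun j => deriv (fun w => chiFun z2 m2 l2 w - linf) (ζ2 j)) i).re := by
  rw [← eventually_nhdsNE_zero_iff_abs]
  have hζ' := eventually_nhdsNE_zero_iff_abs.2 ⟨ε, hε, hζ⟩
  have hsep : Tendsto (fun γ : ℝ => |γ⁻¹|) (𝓝[≠] 0) atTop :=
    tendsto_norm_atTop_iff_cobounded.2 (tendsto_inv₀_nhdsNE_zero (α := ℝ))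
  rcases i with i | j
  · have hx := tendsto_nhdsNE_zero_of_norm_sub_le_mul_abs (hζ'.mono fun γ h => h.2.2.1 i)
    filter_upwards [eventually_im_eq_zero_and_deriv_re_mul_pos (c := fun _ => 0)
      (c' := fun γ => γ⁻¹) hlinfR hc1 hc2 hreal (hζ1p i) (hζ1s i) (by simpa using hsep)
      (by simpa using hx) (hζ'.mono fun γ h => by simpa using (h.2.1 (.inl i)).1)] with γ hγ
    simpa using hγ
  · have hx := tendsto_nhdsNE_zero_of_norm_sub_le_mul_abs (hζ'.mono fun γ h => h.2.2.2 j)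
    filter_upwards [eventually_im_eq_zero_and_deriv_re_mul_pos (c := fun γ => γ⁻¹)
      (c' := fun _ => 0) hlinfR hc2 hc1 hreal (hζ2p j) (hζ2s j) (by simpa using hsep)
      (by simpa using hx) (hζ'.mono fun γ h => by simpa [add_comm] using (h.2.1 (.inr j)).1)]
      with γ hγ
    simpa [add_comm] using hγ
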